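/- arXiv:2310.11908 — 2 statements merged into one kernel-verified Lean document; each statement's English description precedes it below -/
import Mathlib

section
/- Both M_BFS and M_DFS have Price of Anarchy exactly 2 in the edge-reporting game: the supremum over instances of the ratio between the maximum-weight b-matching value and the social welfare at the worst pure Nash equilibrium equals 2. The lower bound is witnessed, for every ε > 0, by two agents of capacity 1, tasks of values 1+ε and 1, and edges {(a_1,t_1),(a_1,t_2),(a_2,t_1)}, where the worst equilibrium has welfare 1+ε while the optimum is 2+ε. -/
open Classical

/-- An edge of the bipartite graph: a pair (agent, task). -/
abbrev Edge (n m : ℕ) := Fin n × Fin m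

variable {n m : ℕ}

/-- Number of tasks assigned to agent `i` in the edge set `μ`. -/
def deg (μ : Finset (Edge n m)) (i : Fin n) : ℕ := (μ.filter (fun e => e.1 = i)).card

/-- `μ` is a b-matching over the edge set `E'`: it uses only edges of `E'`, each agent `i`
receives at most `b i` tasks, and each task is matched to at most one agent. -/
def IsBMatching (b : Fin n → ℕ) (E' μ : Finset (Edge n m)) : Prop :=
  μ ⊆ E' ∧ (∀ i, deg μ i ≤ b i) ∧ ∀ j : Fin m, (μ.filter (fun e => e.2 = j)).card ≤ 1

/-- Weight of a matching: total value of matched tasks. -/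
noncomputable def weight (q : Fin m → ℝ) (μ : Finset (Edge n m)) : ℝ := ∑ e ∈ μ, q e.2

/-- Utility of agent `i`: total value of the tasks matched to `i`. -/
noncomputable def util (q : Fin m → ℝ) (i : Fin n) (μ : Finset (Edge n m)) : ℝ :=
  ∑ e ∈ μ.filter (fun e => e.1 = i), q e.2

/-- `μ` is a maximum vertex-weighted b-matching over the edge set `E'`. -/
def IsMaxMatching (b : Fin n → ℕ) (q : Fin m → ℝ) (E' μ : Finset (Edge n m)) : Prop :=
  IsBMatching b E' μ ∧ ∀ ν, IsBMatching b E' ν → weight q ν ≤ weight q μ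

/-- The edges of `E` incident to agent `i`. -/
def agentEdges (E : Finset (Edge n m)) (i : Fin n) : Finset (Edge n m) :=
  E.filter (fun e => e.1 = i)

/-- The edge set obtained from `E` when agent `i` reports `S` instead of its true edges. -/
def deviate (E : Finset (Edge n m)) (i : Fin n) (S : Finset (Edge n m)) : Finset (Edge n m) :=
  E.filter (fun e => e.1 ≠ i) ∪ S

/-- A valid report of agent `i`: a nonempty subset of its true incident edges. -/
def ValidReport (E : Finset (Edge n m)) (i : Fin n) (S : Finset (Edge n m)) : Prop :=
  S ⊆ agentEdges E i ∧ S.Nonempty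
open Classical in
/-- The tasks sorted in non-increasing order of value (ties broken by index). -/
noncomputable def sortedTasks (m : ℕ) (q : Fin m → ℝ) : List (Fin m) :=
  List.insertionSort (fun j k => q k ≤ q j) (List.finRange m)

/-- The greedy mechanism `M_AP`: process tasks in non-increasing value order, assigning each
task to the highest-priority unsaturated agent connected to it, if any. -/
noncomputable def MAP (b : Fin n → ℕ) (q : Fin m → ℝ) (E' : Finset (Edge n m)) :
    Finset (Edge n m) :=
  (sortedTasks m q).foldl (fun μ j =>
    match (List.finRange n).find? (fun i => decide ((i, j) ∈ E' ∧ deg μ i < b i)) with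
    | some i => insert (i, j) μ
    | none => μ) ∅

/-- `p = [(i₁,j₁),…,(i_L,j_L)]` is an augmenting path from task `j = j₁` with respect to the
matching `μ` in the graph `E'`: the edges `(i_ℓ, j_ℓ)` are non-matching edges of `E'`, the
edges `(i_ℓ, j_{ℓ+1})` are matching edges, all interior agents are saturated and the final
agent is unsaturated. -/
structure IsAugPathFrom (b : Fin n → ℕ) (E' μ : Finset (Edge n m)) (j : Fin m)
    (p : List (Edge n m)) : Prop where
  ne : p ≠ []
  starts : ∀ e ∈ p.head?, e.2 = j
  mem : ∀ e ∈ p, e ∈ E' ∧ e ∉ μ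
  matched : ∀ k, (h : k + 1 < p.length) →
    ((p.get ⟨k, Nat.lt_of_succ_lt h⟩).1, (p.get ⟨k + 1, h⟩).2) ∈ μ
  satInterior : ∀ k, (h : k + 1 < p.length) →
    b (p.get ⟨k, Nat.lt_of_succ_lt h⟩).1 ≤ deg μ (p.get ⟨k, Nat.lt_of_succ_lt h⟩).1
  unsatLast : ∀ e ∈ p.getLast?, deg μ e.1 < b e.1
  agentsNodup : (p.map Prod.fst).Nodup
  tasksNodup : (p.map Prod.snd).Nodup

/-- The matching edges of an augmenting path. -/
def pathMatched (p : List (Edge n m)) : List (Edge n m) :=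
  (p.zip p.tail).map (fun ef => (ef.1.1, ef.2.2))

/-- Flip an augmenting path: remove its matching edges and add its non-matching edges. -/
def applyPath (μ : Finset (Edge n m)) (p : List (Edge n m)) : Finset (Edge n m) :=
  (μ \ (pathMatched p).toFinset) ∪ p.toFinset

/-- A numeric key realizing the lexicographic order (by vertex indices) on augmenting paths. -/
def pathKey (n m : ℕ) (p : List (Edge n m)) : ℕ :=
  ((p.flatMap fun (e : Edge n m) => [e.1.val + 1, e.2.val + 1]) ++
    List.replicate (2 * n - 2 * p.length) 0).foldl (fun a d => a * (n + m + 2) + d) 0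

/-- DFS explores agents in priority order and goes deep first: it returns the lexicographically
least augmenting path. -/
def dfsCost (n m : ℕ) (p : List (Edge n m)) : ℕ := pathKey n m p

/-- BFS returns a shortest augmenting path, exploring vertices in priority order: it returns
the lexicographically least augmenting path among those of minimum length. -/
def bfsCost (n m : ℕ) (p : List (Edge n m)) : ℕ :=
  p.length * (n + m + 2) ^ (2 * n + 2) + pathKey n m p

/-- Select the cost-minimal augmenting path from task `j`, if an augmenting path exists. -/
noncomputable def selectPath (cost : List (Edge n m) → ℕ) (b : Fin n → ℕ)
    (E' μ : Finset (Edge n m)) (j : Fin m) : Option (List (Edge n m)) :=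
  if h : ∃ p, IsAugPathFrom b E' μ j p ∧ ∀ p', IsAugPathFrom b E' μ j p' → cost p ≤ cost p'
  then some h.choose else none

/-- The augmenting-path algorithm: process tasks in non-increasing value order, at each step
flipping the augmenting path found by the (deterministic) search given by `cost`. -/
noncomputable def runAug (cost : List (Edge n m) → ℕ) (b : Fin n → ℕ) (q : Fin m → ℝ)
    (E' : Finset (Edge n m)) : Finset (Edge n m) :=
  (sortedTasks m q).foldl (fun μ j =>
    match selectPath cost b E' μ j with
    | some p => applyPath μ p
    | none => μ) ∅

/-- The maximum vertex-weighted b-matching mechanism using breadth-first search. -/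
noncomputable def MBFS (b : Fin n → ℕ) (q : Fin m → ℝ) (E' : Finset (Edge n m)) :
    Finset (Edge n m) := runAug (bfsCost n m) b q E'

/-- The maximum vertex-weighted b-matching mechanism using depth-first search. -/
noncomputable def MDFS (b : Fin n → ℕ) (q : Fin m → ℝ) (E' : Finset (Edge n m)) :
    Finset (Edge n m) := runAug (dfsCost n m) b q E'
/-- The edge set reported to the mechanism when agents play the strategy profile `D`. -/
def profileInput (D : Fin n → Finset (Edge n m)) : Finset (Edge n m) :=
  Finset.univ.biUnion D

/-- The profile `D` is a pure Nash equilibrium of the edge-reporting game with true edge set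
`E` induced by the mechanism `M`: each strategy is a nonempty subset of the agent's true
incident edges, and no agent can strictly increase its utility by a unilateral deviation. -/
def IsNE (M : Finset (Edge n m) → Finset (Edge n m)) (q : Fin m → ℝ)
    (E : Finset (Edge n m)) (D : Fin n → Finset (Edge n m)) : Prop :=
  (∀ i, D i ⊆ agentEdges E i ∧ (D i).Nonempty) ∧
  ∀ i S, S ⊆ agentEdges E i → S.Nonempty →
    util q i (M (profileInput (Function.update D i S))) ≤ util q i (M (profileInput D))

/-!
The sets of tasks covered by `b`-matchings of a graph are the independent sets of a
(transversal) matroid, and an augmenting path from a new task exists exactly when the matched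
tasks together with it stay independent. So whatever path the search selects, the
augmenting-path mechanism runs the matroid greedy algorithm on the tasks sorted by value: its
output is a maximum-weight `b`-matching, and its set of matched tasks depends only on the
reported graph and grows when one agent's edges are added (a basis of the smaller matroid spans
nothing new in the larger one).

At an equilibrium, let agent `i` report only its edges of an optimal matching `μ` to tasks the
outcome leaves unmatched. The other agents' tasks stay matched, so `i` then receives all these
edges, and at equilibrium it earns at least their value. Hence the weight of `μ` on unmatched
tasks is at most the sum of utilities, i.e. the welfare, and on matched tasks it is at most the
welfare as well.

In the example both searches give `t₁` to `a₁`, who cannot earn more, while `a₂` has a single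
edge; the optimum instead gives `t₂` to `a₁`.
-/
open Finset

lemma List.mem_takeWhile_of_pairwise {α β : Type*} [LinearOrder β] {f : α → β} {L : List α}
    (hL : L.Pairwise (fun x y => f y ≤ f x)) {c : β} {x : α} (hx : x ∈ L) (hc : c ≤ f x) :
    x ∈ L.takeWhile (fun y => decide (c ≤ f y)) := by
  induction L with
  | nil => simp at hx
  | cons y L ih =>
    rw [List.pairwise_cons] at hL
    by_cases hy : c ≤ f y
    · rw [List.takeWhile_cons_of_pos (by simpa using hy)]
      rcases List.mem_cons.1 hx with rfl | hx
      exacts [List.mem_cons_self, List.mem_cons_of_mem y (ih hL.2 hx)]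
    · rcases List.mem_cons.1 hx with rfl | hx
      exacts [absurd hc hy, absurd (hc.trans (hL.1 x hx)) hy]

lemma Finset.sum_le_sum_of_card_filter_le {ι β : Type*} [DecidableEq ι] [AddCommMonoid β]
    [LinearOrder β] [IsOrderedAddMonoid β] {q : ι → β} {C R : Finset ι} (hR : ∀ x ∈ R, 0 ≤ q x)
    (h : ∀ c, #(C.filter (c ≤ q ·)) ≤ #(R.filter (c ≤ q ·))) : ∑ x ∈ C, q x ≤ ∑ x ∈ R, q x := by
  induction C using Finset.induction_on_max_value q generalizing R with
  | empty => simpa using sum_nonneg hR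
  | insert a C haC hmax ih =>
    -- match the largest element `a` of `C` with any element `r` of `R` that is at least as large
    obtain ⟨r, hr⟩ : (R.filter (q a ≤ q ·)).Nonempty := by
      rw [← card_pos]
      refine lt_of_lt_of_le ?_ (h (q a))
      exact card_pos.2 ⟨a, mem_filter.2 ⟨mem_insert_self a C, le_rfl⟩⟩
    obtain ⟨hrR, har⟩ := mem_filter.1 hr
    have hdom : ∀ c, #(C.filter (c ≤ q ·)) ≤ #((R.erase r).filter (c ≤ q ·)) := by
      intro c
      by_cases hc : c ≤ q a
      · have h₁ := h c
        rw [filter_insert, if_pos hc, card_insert_of_notMem (fun h => haC (mem_filter.1 h).1)]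
          at h₁
        rw [filter_erase, card_erase_of_mem (mem_filter.2 ⟨hrR, hc.trans har⟩)]
        omega
      · rw [filter_false_of_mem (fun x hx hcx => hc (hcx.trans (hmax x hx)))]
        exact Nat.zero_le _
    rw [sum_insert haC, ← add_sum_erase R q hrR]
    exact add_le_add har (ih (fun x hx => hR x (mem_of_mem_erase hx)) hdom)

namespace Matroid

variable {α : Type*}

lemma Indep.card_le_card_of_isBasis {M : Matroid α} {C B : Finset α} {X : Set α}
    (hC : M.Indep ↑C) (hCX : ↑C ⊆ X) (hB : M.IsBasis ↑B X) : #C ≤ #B := by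
  obtain ⟨J, hJ, hCJ⟩ := hC.subset_isBasis_of_subset hCX
  have := (Set.encard_le_encard hCJ).trans_eq (hJ.encard_eq_encard hB)
  rwa [Set.encard_coe_eq_coe_finsetCard, Set.encard_coe_eq_coe_finsetCard, Nat.cast_le] at this

variable [DecidableEq α]

noncomputable def greedyStep (M : Matroid α) (A : Finset α) (x : α) : Finset α :=
  if M.Indep ↑(insert x A) then insert x A else A

noncomputable def greedy (M : Matroid α) (L : List α) : Finset α := L.foldl M.greedyStep ∅

variable {M : Matroid α}

lemma subset_greedyStep (A : Finset α) (x : α) : A ⊆ M.greedyStep A x := by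
  unfold greedyStep
  split_ifs
  exacts [subset_insert x A, subset_rfl]

lemma greedyStep_subset_insert (A : Finset α) (x : α) : M.greedyStep A x ⊆ insert x A := by
  unfold greedyStep
  split_ifs
  exacts [subset_rfl, subset_insert x A]

lemma subset_foldl_greedyStep (L : List α) (A : Finset α) : A ⊆ L.foldl M.greedyStep A := by
  induction L generalizing A with
  | nil => exact subset_rfl
  | cons x L ih => exact (subset_greedyStep A x).trans (ih _)

lemma greedy_subset_greedy_append (L₁ L₂ : List α) : M.greedy L₁ ⊆ M.greedy (L₁ ++ L₂) := by
  rw [greedy, greedy, List.foldl_append]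
  exact subset_foldl_greedyStep L₂ _

lemma Indep.greedyStep {A : Finset α} (hA : M.Indep ↑A) (x : α) :
    M.Indep ↑(M.greedyStep A x) := by
  unfold Matroid.greedyStep
  split_ifs with h
  exacts [h, hA]

lemma IsBasis.greedyStep {A : Finset α} {X : Set α} (hA : M.IsBasis ↑A X) {x : α}
    (hx : x ∈ M.E) : M.IsBasis ↑(M.greedyStep A x) (insert x X) := by
  unfold Matroid.greedyStep
  split_ifs with h
  · rw [coe_insert] at h ⊢
    exact hA.insert_isBasis_insert h
  · have hdep : M.IsBasis ↑A (insert x ↑A) := hA.indep.isBasis_insert_iff.2 <| Or.inl <|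
      dep_iff.2 ⟨by rwa [← coe_insert], Set.insert_subset hx hA.indep.subset_ground⟩
    convert hA.isBasis_union hdep using 1
    rw [Set.union_insert, Set.union_eq_self_of_subset_right hA.subset]

lemma IsBasis.foldl_greedyStep {A : Finset α} {X : Set α} (hA : M.IsBasis ↑A X) {L : List α}
    (hL : ∀ x ∈ L, x ∈ M.E) : M.IsBasis ↑(L.foldl M.greedyStep A) (X ∪ {x | x ∈ L}) := by
  induction L generalizing A X with
  | nil => simpa using hA
  | cons x L ih =>
    have := ih (hA.greedyStep (hL x List.mem_cons_self))
      (fun y hy => hL y (List.mem_cons_of_mem x hy))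
    rw [List.foldl_cons]
    convert this using 1
    ext y
    simp only [Set.mem_union, Set.mem_insert_iff, Set.mem_ofPred_eq, List.mem_cons]
    tauto

lemma isBasis_greedy {L : List α} (hL : ∀ x ∈ L, x ∈ M.E) :
    M.IsBasis ↑(M.greedy L) {x | x ∈ L} := by
  have hempty : M.IsBasis ↑(∅ : Finset α) ∅ := by simp
  simpa [greedy] using hempty.foldl_greedyStep hL

lemma card_filter_le_card_filter_greedy {β : Type*} [LinearOrder β] {q : α → β} {L : List α}
    (hsort : L.Pairwise (fun x y => q y ≤ q x)) (hL : ∀ x ∈ L, x ∈ M.E) {C : Finset α}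
    (hC : M.Indep ↑C) (hCL : ∀ x ∈ C, x ∈ L) (c : β) :
    #(C.filter (c ≤ q ·)) ≤ #((M.greedy L).filter (c ≤ q ·)) := by
  -- the elements above `c` form a prefix of `L`, on which greedy builds a basis
  set L₁ := L.takeWhile (fun y => decide (c ≤ q y))
  have hL₁ : ∀ x ∈ L₁, x ∈ L := fun x hx => List.takeWhile_subset _ hx
  have hbasis := isBasis_greedy (M := M) (fun x hx => hL x (hL₁ x hx))
  have hCL₁ : ↑(C.filter (c ≤ q ·)) ⊆ {x | x ∈ L₁} := by
    intro x hx
    rw [mem_coe, mem_filter] at hx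
    exact List.mem_takeWhile_of_pairwise hsort (hCL x hx.1) hx.2
  have hgreedy : M.greedy L₁ ⊆ (M.greedy L).filter (c ≤ q ·) := by
    intro x hx
    have hx₁ : x ∈ L₁ := hbasis.subset hx
    refine mem_filter.2 ⟨?_, by simpa using List.mem_takeWhile_imp hx₁⟩
    rw [← List.takeWhile_append_dropWhile (p := fun y => decide (c ≤ q y)) (l := L)]
    exact greedy_subset_greedy_append _ _ hx
  exact ((hC.subset (coe_subset.2 (filter_subset _ _))).card_le_card_of_isBasis hCL₁ hbasis).trans
    (card_le_card hgreedy)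

theorem sum_le_sum_greedy {β : Type*} [AddCommMonoid β] [LinearOrder β] [IsOrderedAddMonoid β]
    {q : α → β} {L : List α} (hsort : L.Pairwise (fun x y => q y ≤ q x))
    (hL : ∀ x ∈ L, x ∈ M.E) (hq : ∀ x ∈ L, 0 ≤ q x) {C : Finset α} (hC : M.Indep ↑C)
    (hCL : ∀ x ∈ C, x ∈ L) : ∑ x ∈ C, q x ≤ ∑ x ∈ M.greedy L, q x :=
  sum_le_sum_of_card_filter_le (fun x hx => hq x ((isBasis_greedy hL).subset (mem_coe.2 hx)))
    (card_filter_le_card_filter_greedy hsort hL hC hCL)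

section Monotone

variable {M₁ M₂ : Matroid α}
  (hsplit : ∀ B : Finset α, M₂.Indep ↑B → ∃ B₁ ⊆ B, M₁.Indep ↑B₁ ∧
    ∀ x ∉ B, M₁.Indep ↑(insert x B₁) → M₂.Indep ↑(insert x B))
include hsplit

lemma greedyStep_subset_greedyStep {A B : Finset α} {X : Set α} (hA : M₁.IsBasis ↑A X)
    (hB : M₂.Indep ↑B) (hAB : A ⊆ B) (hBX : ↑B ⊆ X) (x : α) :
    M₁.greedyStep A x ⊆ M₂.greedyStep B x := by
  by_cases h₁ : M₁.Indep ↑(insert x A)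
  · rw [greedyStep, if_pos h₁]
    by_cases hxB : x ∈ B
    · exact insert_subset (subset_greedyStep B x hxB) (hAB.trans (subset_greedyStep B x))
    obtain ⟨B₁, hB₁B, hB₁, hext⟩ := hsplit B hB
    rw [coe_insert, hA.indep.insert_indep_iff_of_notMem (fun h => hxB (hAB h))] at h₁
    -- `x` lies outside the closure of `A`, which is the closure of `X ⊇ B₁`
    have hcl : M₁.closure ↑B₁ ⊆ M₁.closure ↑A :=
      hA.closure_eq_closure ▸ M₁.closure_subset_closure ((coe_subset.2 hB₁B).trans hBX)
    have h₂ : M₂.Indep ↑(insert x B) := by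
      refine hext x hxB ?_
      rw [coe_insert, hB₁.insert_indep_iff_of_notMem (fun h => hxB (hB₁B h))]
      exact ⟨h₁.1, fun h => h₁.2 (hcl h)⟩
    rw [greedyStep, if_pos h₂]
    exact insert_subset_insert x hAB
  · rw [greedyStep, if_neg h₁]
    exact hAB.trans (subset_greedyStep B x)

lemma foldl_greedyStep_subset {L : List α} (hL : ∀ x ∈ L, x ∈ M₁.E) {A B : Finset α}
    {X : Set α} (hA : M₁.IsBasis ↑A X) (hB : M₂.Indep ↑B) (hAB : A ⊆ B) (hBX : ↑B ⊆ X) :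
    L.foldl M₁.greedyStep A ⊆ L.foldl M₂.greedyStep B := by
  induction L generalizing A B X with
  | nil => exact hAB
  | cons x L ih =>
    refine ih (fun y hy => hL y (List.mem_cons_of_mem x hy)) (hA.greedyStep (hL x (by simp)))
      (hB.greedyStep x) (greedyStep_subset_greedyStep hsplit hA hB hAB hBX x) ?_
    refine (coe_subset.2 (greedyStep_subset_insert B x)).trans ?_
    rw [coe_insert]
    exact Set.insert_subset_insert hBX

theorem greedy_subset_greedy {L : List α} (hL : ∀ x ∈ L, x ∈ M₁.E) :
    M₁.greedy L ⊆ M₂.greedy L :=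
  foldl_greedyStep_subset hsplit hL (X := ∅) (by simp) (by simp) subset_rfl (by simp)

end Monotone

end Matroid

section Matching

variable {b : Fin n → ℕ} {E' μ ν : Finset (Edge n m)}

def matchedTasks (μ : Finset (Edge n m)) : Finset (Fin m) := μ.image Prod.snd

def IsCoverable (b : Fin n → ℕ) (E' : Finset (Edge n m)) (C : Finset (Fin m)) : Prop :=
  ∃ μ, IsBMatching b E' μ ∧ matchedTasks μ = C

lemma mem_matchedTasks {t : Fin m} : t ∈ matchedTasks μ ↔ ∃ e ∈ μ, e.2 = t := mem_image

lemma snd_mem_matchedTasks {e : Edge n m} (he : e ∈ μ) : e.2 ∈ matchedTasks μ :=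
  mem_image_of_mem _ he

lemma matchedTasks_insert (e : Edge n m) (μ : Finset (Edge n m)) :
    matchedTasks (insert e μ) = insert e.2 (matchedTasks μ) := image_insert _ _ _

lemma matchedTasks_mono (h : μ ⊆ ν) : matchedTasks μ ⊆ matchedTasks ν := image_subset_image h

lemma isBMatching_empty : IsBMatching b E' ∅ := by
  simp [IsBMatching, deg]

lemma IsBMatching.eq_of_snd_eq (h : IsBMatching b E' μ) {e f : Edge n m} (he : e ∈ μ)
    (hf : f ∈ μ) (hef : e.2 = f.2) : e = f :=
  card_le_one.1 (h.2.2 e.2) e (mem_filter.2 ⟨he, rfl⟩) f (mem_filter.2 ⟨hf, hef.symm⟩)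

lemma IsBMatching.mono (h : IsBMatching b E' ν) (hμν : μ ⊆ ν) : IsBMatching b E' μ :=
  ⟨hμν.trans h.1, fun i => (card_le_card (filter_subset_filter _ hμν)).trans (h.2.1 i),
    fun t => (card_le_card (filter_subset_filter _ hμν)).trans (h.2.2 t)⟩

lemma IsBMatching.card_matchedTasks (h : IsBMatching b E' μ) : #(matchedTasks μ) = #μ :=
  card_image_of_injOn fun _ he _ hf hef => h.eq_of_snd_eq he hf hef

lemma IsBMatching.weight_eq (h : IsBMatching b E' μ) (q : Fin m → ℝ) :
    weight q μ = ∑ t ∈ matchedTasks μ, q t :=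
  (sum_image fun _ he _ hf hef => h.eq_of_snd_eq he hf hef).symm

lemma weight_eq_sum_util (q : Fin m → ℝ) (μ : Finset (Edge n m)) :
    weight q μ = ∑ i, util q i μ :=
  (sum_fiberwise μ Prod.fst _).symm

lemma IsCoverable.subset {C D : Finset (Fin m)} (h : IsCoverable b E' C) (hDC : D ⊆ C) :
    IsCoverable b E' D := by
  obtain ⟨μ, hμ, rfl⟩ := h
  refine ⟨μ.filter (·.2 ∈ D), hμ.mono (filter_subset _ _), ?_⟩
  ext t
  simp only [matchedTasks, mem_image, mem_filter]
  constructor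
  · rintro ⟨e, ⟨-, he⟩, rfl⟩
    exact he
  · intro ht
    obtain ⟨e, he, rfl⟩ := mem_image.1 (hDC ht)
    exact ⟨e, ⟨he, ht⟩, rfl⟩

lemma IsBMatching.insert_of_deg_lt (hμ : IsBMatching b E' μ) {e : Edge n m} (he : e ∈ E')
    (hdeg : deg μ e.1 < b e.1) (ht : e.2 ∉ matchedTasks μ) : IsBMatching b E' (insert e μ) := by
  refine ⟨insert_subset he hμ.1, fun i => ?_, fun t => ?_⟩
  · rw [deg, filter_insert]
    split_ifs with hi
    · subst hi
      exact (card_insert_le _ _).trans hdeg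
    · exact hμ.2.1 i
  · rw [filter_insert]
    split_ifs with het
    · subst het
      rw [filter_false_of_mem fun (f : Edge n m) hf (hfe : f.2 = e.2) =>
        ht (hfe ▸ snd_mem_matchedTasks hf)]
      simp
    · exact hμ.2.2 t

lemma IsBMatching.union {E₁ E₂ μ₁ μ₂ : Finset (Edge n m)} (h₁ : IsBMatching b E₁ μ₁)
    (h₂ : IsBMatching b E₂ μ₂) (hagents : ∀ e ∈ μ₁, ∀ f ∈ μ₂, e.1 ≠ f.1)
    (htasks : Disjoint (matchedTasks μ₁) (matchedTasks μ₂)) :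
    IsBMatching b (E₁ ∪ E₂) (μ₁ ∪ μ₂) := by
  refine ⟨union_subset_union h₁.1 h₂.1, fun i => ?_, fun t => ?_⟩
  · rw [deg, filter_union]
    by_cases hi : ∃ f ∈ μ₂, f.1 = i
    · obtain ⟨f, hf, rfl⟩ := hi
      rw [filter_false_of_mem fun e he hei => hagents e he f hf hei, empty_union]
      exact h₂.2.1 _
    · push Not at hi
      rw [filter_false_of_mem hi, union_empty]
      exact h₁.2.1 i
  · rw [filter_union]
    by_cases ht : t ∈ matchedTasks μ₂
    · rw [filter_false_of_mem fun (e : Edge n m) he (het : e.2 = t) =>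
        disjoint_left.1 htasks (snd_mem_matchedTasks he) (het ▸ ht), empty_union]
      exact h₂.2.2 t
    · rw [filter_false_of_mem fun (e : Edge n m) he (het : e.2 = t) =>
        ht (het ▸ snd_mem_matchedTasks he), union_empty]
      exact h₁.2.2 t

lemma card_filter_fst_mem (μ : Finset (Edge n m)) (R : Finset (Fin n)) :
    #(μ.filter (·.1 ∈ R)) = ∑ a ∈ R, deg μ a := by
  rw [card_eq_sum_card_fiberwise (f := Prod.fst) (s := μ.filter (·.1 ∈ R)) (t := R)
    fun e he => (mem_filter.1 he).2]
  refine sum_congr rfl fun a ha => ?_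
  rw [deg, filter_filter]
  congr 1
  ext e
  simp only [mem_filter]
  constructor
  · exact fun h => ⟨h.1, h.2.2⟩
  · rintro ⟨he, rfl⟩
    exact ⟨he, ha, rfl⟩

lemma IsBMatching.card_le_sum_of_forall_fst_mem (hν : IsBMatching b E' ν)
    {X : Finset (Fin m)} {R : Finset (Fin n)} (hX : X ⊆ matchedTasks ν)
    (hR : ∀ e ∈ ν, e.2 ∈ X → e.1 ∈ R) : #X ≤ ∑ a ∈ R, b a := by
  have hsub : X ⊆ matchedTasks (ν.filter (·.1 ∈ R)) := by
    intro t ht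
    obtain ⟨e, he, rfl⟩ := mem_matchedTasks.1 (hX ht)
    exact snd_mem_matchedTasks (mem_filter.2 ⟨he, hR e he ht⟩)
  calc #X ≤ #(ν.filter (·.1 ∈ R)) := (card_le_card hsub).trans card_image_le
    _ = ∑ a ∈ R, deg ν a := card_filter_fst_mem ν R
    _ ≤ ∑ a ∈ R, b a := sum_le_sum fun a _ => hν.2.1 a

lemma IsBMatching.card_matchedTasks_filter_of_saturated (hμ : IsBMatching b E' μ)
    {R : Finset (Fin n)} (hsat : ∀ a ∈ R, b a ≤ deg μ a) :
    #(matchedTasks (μ.filter (·.1 ∈ R))) = ∑ a ∈ R, b a := by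
  rw [(hμ.mono (filter_subset _ _)).card_matchedTasks, card_filter_fst_mem]
  exact sum_congr rfl fun a ha => (hμ.2.1 a).antisymm (hsat a ha)

lemma IsBMatching.util_le (hμ : IsBMatching b E' μ) (q : Fin m → ℝ) {W : ℝ} (hW : 0 ≤ W)
    (hq : ∀ t, q t ≤ W) (i : Fin n) : util q i μ ≤ b i * W :=
  calc util q i μ ≤ deg μ i • W := sum_le_card_nsmul _ _ _ fun e _ => hq e.2
    _ ≤ b i * W := by
      rw [nsmul_eq_mul]
      exact mul_le_mul_of_nonneg_right (Nat.cast_le.2 (hμ.2.1 i)) hW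

end Matching

section AltPath

variable {b : Fin n → ℕ} {E' μ : Finset (Edge n m)} {j : Fin m} {p : List (Edge n m)}

structure IsAltPathFrom (E' μ : Finset (Edge n m)) (j : Fin m) (p : List (Edge n m)) :
    Prop where
  ne : p ≠ []
  starts : ∀ e ∈ p.head?, e.2 = j
  mem : ∀ e ∈ p, e ∈ E' ∧ e ∉ μ
  chain : p.IsChain (fun e f => (e.1, f.2) ∈ μ)
  agentsNodup : (p.map Prod.fst).Nodup
  tasksNodup : (p.map Prod.snd).Nodup

theorem isAugPathFrom_iff : IsAugPathFrom b E' μ j p ↔ IsAltPathFrom E' μ j p ∧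
    (∀ e ∈ p.dropLast, b e.1 ≤ deg μ e.1) ∧ ∀ e ∈ p.getLast?, deg μ e.1 < b e.1 := by
  constructor
  · intro h
    refine ⟨⟨h.ne, h.starts, h.mem, List.isChain_iff_getElem.2 fun k hk => h.matched k hk,
      h.agentsNodup, h.tasksNodup⟩, fun e he => ?_, h.unsatLast⟩
    obtain ⟨k, hk, rfl⟩ := List.mem_iff_getElem.1 he
    rw [List.getElem_dropLast]
    exact h.satInterior k (by simp only [List.length_dropLast] at hk; omega)
  · rintro ⟨h, hsat, hlast⟩
    refine ⟨h.ne, h.starts, h.mem, fun k hk => List.isChain_iff_getElem.1 h.chain k hk,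
      fun k hk => ?_, hlast, h.agentsNodup, h.tasksNodup⟩
    have hk' : k < p.dropLast.length := by simp only [List.length_dropLast]; omega
    have := hsat _ (List.getElem_mem hk')
    rwa [List.getElem_dropLast] at this

lemma IsAltPathFrom.left_of_append {p₁ p₂ : List (Edge n m)}
    (h : IsAltPathFrom E' μ j (p₁ ++ p₂)) (hne : p₁ ≠ []) : IsAltPathFrom E' μ j p₁ where
  ne := hne
  starts e he := h.starts e (by rwa [List.head?_append_of_ne_nil _ hne])
  mem e he := h.mem e (List.mem_append_left _ he)
  chain := h.chain.left_of_append
  agentsNodup := by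
    have := h.agentsNodup
    rw [List.map_append] at this
    exact this.of_append_left
  tasksNodup := by
    have := h.tasksNodup
    rw [List.map_append] at this
    exact this.of_append_left

lemma IsAltPathFrom.concat (h : IsAltPathFrom E' μ j p) {g : Edge n m} (hg : g ∈ E' ∧ g ∉ μ)
    (hlink : ∀ e ∈ p.getLast?, (e.1, g.2) ∈ μ) (ha : g.1 ∉ p.map Prod.fst)
    (ht : g.2 ∉ p.map Prod.snd) : IsAltPathFrom E' μ j (p ++ [g]) where
  ne := by simp
  starts e he := h.starts e (by rwa [List.head?_append_of_ne_nil _ h.ne] at he)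
  mem e he := by
    rcases List.mem_append.1 he with he | he
    · exact h.mem e he
    · rw [List.mem_singleton.1 he]
      exact hg
  chain := h.chain.append (List.isChain_singleton g) (by simpa using hlink)
  agentsNodup := by
    rw [List.map_append, List.nodup_append]
    exact ⟨h.agentsNodup, List.nodup_singleton _, fun a ha' c hc hac => ha (by
      rw [List.map_singleton, List.mem_singleton] at hc
      rwa [← hc, ← hac])⟩
  tasksNodup := by
    rw [List.map_append, List.nodup_append]
    exact ⟨h.tasksNodup, List.nodup_singleton _, fun a ha' c hc hac => ht (by
      rw [List.map_singleton, List.mem_singleton] at hc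
      rwa [← hc, ← hac])⟩

lemma IsAltPathFrom.exists_isAugPathFrom (h : IsAltPathFrom E' μ j p) {e : Edge n m}
    (he : e ∈ p) (hunsat : deg μ e.1 < b e.1) : ∃ p', IsAugPathFrom b E' μ j p' := by
  induction p using List.reverseRecOn generalizing e with
  | nil => exact absurd rfl h.ne
  | append_singleton l x ih =>
    -- cut the path at its first unsaturated agent
    by_cases hl : ∃ e' ∈ l, deg μ e'.1 < b e'.1
    · obtain ⟨e', he', hunsat'⟩ := hl
      exact ih (h.left_of_append (List.ne_nil_of_mem he')) he' hunsat'
    · push Not at hl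
      refine ⟨l ++ [x], isAugPathFrom_iff.2 ⟨h, by simpa using hl, ?_⟩⟩
      rcases List.mem_append.1 he with he | he
      · exact absurd hunsat (not_lt.2 (hl e he))
      · simpa [List.mem_singleton.1 he] using hunsat

lemma IsAltPathFrom.snd_notMem (hμ : IsBMatching b E' μ) (hj : j ∉ matchedTasks μ)
    (h : IsAltPathFrom E' μ j p) {f : Edge n m} (hf : f ∈ μ)
    (hlast : ∀ e ∈ p.getLast?, e.1 = f.1) : f.2 ∉ p.map Prod.snd := by
  intro hmem
  obtain ⟨g, hg, hgf⟩ := List.mem_map.1 hmem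
  obtain ⟨s, t, rfl⟩ := List.append_of_mem hg
  rcases List.eq_nil_or_concat s with rfl | ⟨s, g', rfl⟩
  · exact hj (h.starts g (by simp) ▸ hgf ▸ snd_mem_matchedTasks hf)
  -- the predecessor `g'` of `g` is linked to `g` by a matching edge, which must be `f`
  rw [show s.concat g' ++ g :: t = s ++ g' :: g :: t by simp] at h hlast
  have hg' : (g'.1, g.2) = f :=
    hμ.eq_of_snd_eq (List.isChain_append_cons_cons.1 h.chain).2.1 hf hgf
  have hnodup := h.agentsNodup
  simp only [List.map_append, List.map_cons, List.nodup_append, List.nodup_cons] at hnodup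
  apply hnodup.2.1.1
  rw [List.getLast?_append_of_ne_nil _ (List.cons_ne_nil _ _),
    List.getLast?_eq_some_getLast (List.cons_ne_nil g' _)] at hlast
  have hl := hlast _ rfl
  rw [List.getLast_cons (List.cons_ne_nil _ _)] at hl
  rw [← List.map_cons, List.mem_map]
  exact ⟨_, List.getLast_mem _, hl.trans (congrArg Prod.fst hg').symm⟩

noncomputable def altReach (E' μ : Finset (Edge n m)) (j : Fin m) : Finset (Fin n) :=
  univ.filter fun a => ∃ p, IsAltPathFrom E' μ j p ∧ a ∈ p.map Prod.fst

lemma le_deg_of_mem_altReach (hno : ¬∃ p, IsAugPathFrom b E' μ j p) {a : Fin n}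
    (ha : a ∈ altReach E' μ j) : b a ≤ deg μ a := by
  obtain ⟨p, hp, hap⟩ := (mem_filter.1 ha).2
  obtain ⟨e, he, rfl⟩ := List.mem_map.1 hap
  by_contra hlt
  exact hno (hp.exists_isAugPathFrom he (not_le.1 hlt))

lemma fst_mem_altReach_of_snd_eq (hj : j ∉ matchedTasks μ) {e : Edge n m} (he : e ∈ E')
    (hej : e.2 = j) : e.1 ∈ altReach E' μ j := by
  refine mem_filter.2 ⟨mem_univ _, [e], ⟨by simp, by simpa using hej, ?_,
    List.isChain_singleton e, by simp, by simp⟩, by simp⟩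
  simpa using ⟨he, fun h => hj (hej ▸ snd_mem_matchedTasks h)⟩

lemma fst_mem_altReach_of_snd_eq_snd (hμ : IsBMatching b E' μ) (hj : j ∉ matchedTasks μ)
    {f : Edge n m} (hf : f ∈ μ) (hfR : f.1 ∈ altReach E' μ j) {e : Edge n m} (he : e ∈ E')
    (hef : e.2 = f.2) : e.1 ∈ altReach E' μ j := by
  by_cases heμ : e ∈ μ
  · rwa [hμ.eq_of_snd_eq heμ hf hef]
  -- cut an alternating path after `f.1` and extend it by `e`, unless `e.1` already lies on it
  obtain ⟨p, hp, hfp⟩ := (mem_filter.1 hfR).2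
  obtain ⟨g, hg, hgf⟩ := List.mem_map.1 hfp
  obtain ⟨s, t, rfl⟩ := List.append_of_mem hg
  rw [show s ++ g :: t = (s ++ [g]) ++ t by simp] at hp
  replace hp := hp.left_of_append (by simp)
  have hlast : ∀ x ∈ (s ++ [g]).getLast?, x.1 = f.1 := by simpa using hgf
  by_cases hea : e.1 ∈ (s ++ [g]).map Prod.fst
  · exact mem_filter.2 ⟨mem_univ _, _, hp, hea⟩
  refine mem_filter.2 ⟨mem_univ _, _, hp.concat ⟨he, heμ⟩ ?_ hea ?_, by simp⟩
  · intro x hx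
    rw [hlast x hx, hef]
    exact hf
  · rw [hef]
    exact hp.snd_notMem hμ hj hf hlast

lemma IsAugPathFrom.exists_eq_singleton_of_empty (h : IsAugPathFrom b E' ∅ j p) :
    ∃ e ∈ E', e.2 = j ∧ p = [e] := by
  obtain ⟨halt, -, -⟩ := isAugPathFrom_iff.1 h
  match p, halt with
  | [], halt => exact absurd rfl halt.ne
  | [e], halt => exact ⟨e, (halt.mem e (by simp)).1, halt.starts e rfl, rfl⟩
  | e :: f :: _, halt => exact absurd (List.isChain_cons_cons.1 halt.chain).1 (notMem_empty _)

end AltPath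

section Flip

variable {b : Fin n → ℕ} {E' μ : Finset (Edge n m)} {j : Fin m}

lemma fst_mem_of_mem_pathMatched {p : List (Edge n m)} {x : Edge n m}
    (hx : x ∈ pathMatched p) : x.1 ∈ p.map Prod.fst := by
  obtain ⟨⟨e, f⟩, hef, rfl⟩ := List.mem_map.1 hx
  exact List.mem_map_of_mem (f := Prod.fst) (a := e) (List.of_mem_zip hef).1

lemma applyPath_singleton (μ : Finset (Edge n m)) (e : Edge n m) :
    applyPath μ [e] = insert e μ := by
  ext x
  simp [applyPath, pathMatched]

lemma applyPath_cons_cons (μ : Finset (Edge n m)) {e f : Edge n m} {r : List (Edge n m)}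
    (he : e ∉ pathMatched (f :: r)) :
    applyPath μ (e :: f :: r) = applyPath (insert e (μ.erase (e.1, f.2))) (f :: r) := by
  have hpm : pathMatched (e :: f :: r) = (e.1, f.2) :: pathMatched (f :: r) := rfl
  ext x
  simp only [applyPath, hpm, mem_union, mem_sdiff, mem_insert, mem_erase, List.mem_toFinset,
    List.mem_cons]
  by_cases hx : x = e
  · subst hx
    tauto
  · tauto

lemma deg_insert_erase {c e : Edge n m} (hc : c ∈ μ) (he : e ∉ μ) (hec : e.1 = c.1)
    (x : Fin n) : deg (insert e (μ.erase c)) x = deg μ x := by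
  rw [deg, deg, filter_insert, filter_erase]
  split_ifs with hx
  · have hcx : c ∈ μ.filter (·.1 = x) := mem_filter.2 ⟨hc, hec ▸ hx⟩
    rw [card_insert_of_notMem fun h => he (mem_filter.1 (mem_of_mem_erase h)).1,
      card_erase_add_one hcx]
  · rw [erase_eq_of_notMem (s := μ.filter (·.1 = x)) fun h => hx (hec.trans (mem_filter.1 h).2)]

lemma IsBMatching.matchedTasks_erase (hμ : IsBMatching b E' μ) {c : Edge n m} (hc : c ∈ μ) :
    matchedTasks (μ.erase c) = (matchedTasks μ).erase c.2 := by
  ext t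
  simp only [mem_erase, mem_matchedTasks]
  constructor
  · rintro ⟨e, ⟨hec, he⟩, rfl⟩
    exact ⟨fun h => hec (hμ.eq_of_snd_eq he hc h), e, he, rfl⟩
  · rintro ⟨htc, e, he, rfl⟩
    exact ⟨e, ⟨fun h => htc (h ▸ rfl), he⟩, rfl⟩

lemma IsBMatching.insert_erase (hμ : IsBMatching b E' μ) {c e : Edge n m} (hc : c ∈ μ)
    (he : e ∈ E') (hec : e.1 = c.1) (ht : e.2 ∉ matchedTasks μ) :
    IsBMatching b E' (insert e (μ.erase c)) := by
  refine (hμ.mono (erase_subset c μ)).insert_of_deg_lt he ?_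
    fun h => ht (matchedTasks_mono (erase_subset c μ) h)
  rw [deg, filter_erase, hec]
  exact (card_erase_lt_of_mem (s := μ.filter (·.1 = c.1)) (mem_filter.2 ⟨hc, rfl⟩)).trans_le
    (hμ.2.1 c.1)

lemma IsAltPathFrom.tail_insert_erase {e f : Edge n m} {r : List (Edge n m)}
    (h : IsAltPathFrom E' μ j (e :: f :: r)) :
    IsAltPathFrom E' (insert e (μ.erase (e.1, f.2))) f.2 (f :: r) where
  ne := List.cons_ne_nil _ _
  starts g hg := by
    rw [List.head?_cons, Option.mem_some_iff] at hg
    rw [hg]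
  mem g hg := by
    have hg' := h.mem g (List.mem_cons_of_mem e hg)
    refine ⟨hg'.1, ?_⟩
    rw [mem_insert, mem_erase]
    rintro (rfl | ⟨-, hgμ⟩)
    · exact (List.nodup_cons.1 h.tasksNodup).1 (List.mem_map_of_mem hg)
    · exact hg'.2 hgμ
  chain := by
    refine (List.isChain_cons_cons.1 h.chain).2.imp_of_mem_imp
      fun g g' hg _ hgg' => mem_insert_of_mem (mem_erase.2 ⟨fun heq => ?_, hgg'⟩)
    refine (List.nodup_cons.1 h.agentsNodup).1 ?_
    rw [← congrArg Prod.fst heq]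
    exact List.mem_map_of_mem (f := Prod.fst) (a := g) hg
  agentsNodup := (List.nodup_cons.1 h.agentsNodup).2
  tasksNodup := (List.nodup_cons.1 h.tasksNodup).2

lemma IsAltPathFrom.applyPath_spec {p : List (Edge n m)} :
    ∀ {μ : Finset (Edge n m)} {j : Fin m}, IsBMatching b E' μ → j ∉ matchedTasks μ →
      IsAltPathFrom E' μ j p → (∀ e ∈ p.dropLast, b e.1 ≤ deg μ e.1) →
      (∀ e ∈ p.getLast?, deg μ e.1 < b e.1) →
      IsBMatching b E' (applyPath μ p) ∧
        matchedTasks (applyPath μ p) = insert j (matchedTasks μ) := by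
  induction p with
  | nil => exact fun _ _ h => absurd rfl h.ne
  | cons e l ih =>
    intro μ j hμ hj h hsat hlast
    have hej : e.2 = j := h.starts e rfl
    have heE := h.mem e List.mem_cons_self
    cases l with
    | nil =>
      rw [applyPath_singleton, matchedTasks_insert, hej]
      exact ⟨hμ.insert_of_deg_lt heE.1 (hlast e rfl) (hej ▸ hj), rfl⟩
    | cons f r =>
      -- rematch `e.1` from `f.2` to `j` and continue along the tail from the freed task `f.2`
      have hc : (e.1, f.2) ∈ μ := (List.isChain_cons_cons.1 h.chain).1
      have he₁ : e.1 ∉ (f :: r).map Prod.fst := (List.nodup_cons.1 h.agentsNodup).1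
      have hfj : f.2 ≠ j := fun hfj => (List.nodup_cons.1 h.tasksNodup).1
        (hej ▸ hfj ▸ List.mem_map_of_mem List.mem_cons_self)
      have hdeg := deg_insert_erase hc heE.2 rfl
      have hmt : matchedTasks (insert e (μ.erase (e.1, f.2))) =
          insert j ((matchedTasks μ).erase f.2) := by
        rw [matchedTasks_insert, hμ.matchedTasks_erase hc, hej]
      obtain ⟨hres, hresmt⟩ := ih (hμ.insert_erase hc heE.1 rfl (hej ▸ hj))
        (by simp [hmt, hfj]) h.tail_insert_erase
        (fun g hg => by
          rw [hdeg]
          exact hsat g (by rw [List.dropLast_cons_cons]; exact List.mem_cons_of_mem e hg))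
        (fun g hg => by
          rw [hdeg]
          exact hlast g (by rwa [List.getLast?_cons_cons]))
      rw [applyPath_cons_cons μ fun hx => he₁ (fst_mem_of_mem_pathMatched hx)]
      refine ⟨hres, ?_⟩
      rw [hresmt, hmt, Finset.insert_comm, insert_erase (snd_mem_matchedTasks hc)]

theorem IsAugPathFrom.isBMatching_applyPath {p : List (Edge n m)} (hμ : IsBMatching b E' μ)
    (hj : j ∉ matchedTasks μ) (h : IsAugPathFrom b E' μ j p) :
    IsBMatching b E' (applyPath μ p) :=
  let ⟨halt, hsat, hlast⟩ := isAugPathFrom_iff.1 h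
  (halt.applyPath_spec hμ hj hsat hlast).1

theorem IsAugPathFrom.matchedTasks_applyPath {p : List (Edge n m)} (hμ : IsBMatching b E' μ)
    (hj : j ∉ matchedTasks μ) (h : IsAugPathFrom b E' μ j p) :
    matchedTasks (applyPath μ p) = insert j (matchedTasks μ) :=
  let ⟨halt, hsat, hlast⟩ := isAugPathFrom_iff.1 h
  (halt.applyPath_spec hμ hj hsat hlast).2

lemma IsAugPathFrom.isCoverable_insert {p : List (Edge n m)} (hμ : IsBMatching b E' μ)
    (hj : j ∉ matchedTasks μ) (h : IsAugPathFrom b E' μ j p) :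
    IsCoverable b E' (insert j (matchedTasks μ)) :=
  ⟨_, h.isBMatching_applyPath hμ hj, h.matchedTasks_applyPath hμ hj⟩

end Flip

section Transversal

variable {b : Fin n → ℕ} {E' μ ν : Finset (Edge n m)}

theorem exists_isAugPathFrom_of_card_lt (hμ : IsBMatching b E' μ) (hν : IsBMatching b E' ν)
    (hlt : #(matchedTasks μ) < #(matchedTasks ν)) :
    ∃ u ∈ matchedTasks ν \ matchedTasks μ, ∃ p, IsAugPathFrom b E' μ u p := by
  by_contra! hno
  -- then the agents `R` reachable from the tasks `U` matched by `ν` only are saturated by `μ`,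
  -- and the `ν`-edges at `U` and at the `μ`-tasks of `R` all end in `R`: too many for `R`
  set U := matchedTasks ν \ matchedTasks μ
  set R := U.biUnion (altReach E' μ)
  set M := matchedTasks (μ.filter (·.1 ∈ R))
  have hsat : ∀ a ∈ R, b a ≤ deg μ a := by
    intro a ha
    obtain ⟨u, hu, hau⟩ := mem_biUnion.1 ha
    exact le_deg_of_mem_altReach (fun ⟨p, hp⟩ => hno u hu p hp) hau
  have hMμ : M ⊆ matchedTasks μ := matchedTasks_mono (filter_subset _ _)
  have hinto : ∀ e ∈ ν, e.2 ∈ U ∪ matchedTasks ν ∩ M → e.1 ∈ R := by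
    intro e he het
    rcases mem_union.1 het with hU | hM
    · exact mem_biUnion.2
        ⟨e.2, hU, fst_mem_altReach_of_snd_eq (mem_sdiff.1 hU).2 (hν.1 he) rfl⟩
    · obtain ⟨f, hf, hfe⟩ := mem_matchedTasks.1 (mem_inter.1 hM).2
      obtain ⟨hfμ, hfR⟩ := mem_filter.1 hf
      obtain ⟨u, hu, hfu⟩ := mem_biUnion.1 hfR
      exact mem_biUnion.2 ⟨u, hu,
        fst_mem_altReach_of_snd_eq_snd hμ (mem_sdiff.1 hu).2 hfμ hfu (hν.1 he) hfe.symm⟩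
  have hcount := hν.card_le_sum_of_forall_fst_mem
    (union_subset sdiff_subset inter_subset_left) hinto
  rw [card_union_of_disjoint (disjoint_left.2 fun t htU htM =>
      (mem_sdiff.1 htU).2 (hMμ (mem_inter.1 htM).2))] at hcount
  have hMcard : #M = ∑ a ∈ R, b a := hμ.card_matchedTasks_filter_of_saturated hsat
  have hM := card_inter_add_card_sdiff M (matchedTasks ν)
  have hMν : #(M \ matchedTasks ν) ≤ #(matchedTasks μ \ matchedTasks ν) :=
    card_le_card (sdiff_subset_sdiff hMμ subset_rfl)
  have hν' := card_sdiff_add_card_inter (matchedTasks ν) (matchedTasks μ)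
  have hμ' := card_sdiff_add_card_inter (matchedTasks μ) (matchedTasks ν)
  rw [inter_comm M] at hM
  rw [inter_comm (matchedTasks μ)] at hμ'
  omega

lemma IsCoverable.exists_insert {Y C : Finset (Fin m)} (hY : IsCoverable b E' Y)
    (hC : IsCoverable b E' C) (hlt : #Y < #C) :
    ∃ u ∈ C, u ∉ Y ∧ IsCoverable b E' (insert u Y) := by
  obtain ⟨μ, hμ, rfl⟩ := hY
  obtain ⟨ν, hν, rfl⟩ := hC
  obtain ⟨u, hu, p, hp⟩ := exists_isAugPathFrom_of_card_lt hμ hν hlt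
  obtain ⟨hu, huμ⟩ := mem_sdiff.1 hu
  exact ⟨u, hu, huμ, hp.isCoverable_insert hμ huμ⟩

noncomputable def transversalMatroid (b : Fin n → ℕ) (E' : Finset (Edge n m)) :
    Matroid (Fin m) :=
  (IndepMatroid.ofFinset Set.univ (IsCoverable b E')
    (⟨∅, isBMatching_empty, image_empty _⟩ : IsCoverable b E' ∅)
    (fun _ _ hJ hIJ => hJ.subset hIJ) (fun _ _ hI hJ hlt => hI.exists_insert hJ hlt)
    (fun _ _ => Set.subset_univ _)).matroid

@[simp] lemma transversalMatroid_indep_iff {C : Finset (Fin m)} :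
    (transversalMatroid b E').Indep ↑C ↔ IsCoverable b E' C := by
  rw [transversalMatroid, IndepMatroid.matroid_Indep]
  exact IndepMatroid.ofFinset_indep ..

end Transversal

section Algorithm

variable {cost : List (Edge n m) → ℕ} {b : Fin n → ℕ} {q : Fin m → ℝ}
  {E' μ : Finset (Edge n m)} {j : Fin m}

lemma mem_sortedTasks (q : Fin m → ℝ) (t : Fin m) : t ∈ sortedTasks m q :=
  (List.perm_insertionSort _ _).mem_iff.2 (List.mem_finRange t)

lemma nodup_sortedTasks (q : Fin m → ℝ) : (sortedTasks m q).Nodup :=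
  (List.perm_insertionSort _ _).nodup_iff.2 (List.nodup_finRange m)

lemma pairwise_sortedTasks (q : Fin m → ℝ) :
    (sortedTasks m q).Pairwise (fun j k => q k ≤ q j) := by
  have : Std.Total (fun j k : Fin m => q k ≤ q j) := ⟨fun a b => le_total (q b) (q a)⟩
  have : IsTrans (Fin m) (fun j k => q k ≤ q j) := ⟨fun _ _ _ hab hbc => hbc.trans hab⟩
  exact List.pairwise_insertionSort _ _

lemma isAugPathFrom_of_selectPath_eq_some {p : List (Edge n m)}
    (h : selectPath cost b E' μ j = some p) : IsAugPathFrom b E' μ j p := by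
  unfold selectPath at h
  split_ifs at h with hex
  exact Option.some_injective _ h ▸ hex.choose_spec.1

lemma selectPath_eq_none_iff :
    selectPath cost b E' μ j = none ↔ ¬∃ p, IsAugPathFrom b E' μ j p := by
  unfold selectPath
  split_ifs with hex
  · simpa using ⟨_, hex.choose_spec.1⟩
  · simp only [true_iff]
    intro hpath
    obtain ⟨p, hp, hmin⟩ := (measure cost).wf.has_min {p | IsAugPathFrom b E' μ j p} hpath
    exact hex ⟨p, hp, fun p' hp' => not_lt.1 (hmin p' hp')⟩

lemma selectPath_eq_some {p : List (Edge n m)} (hp : IsAugPathFrom b E' μ j p)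
    (hmin : ∀ p', IsAugPathFrom b E' μ j p' → p' ≠ p → cost p < cost p') :
    selectPath cost b E' μ j = some p := by
  have hex : ∃ p', IsAugPathFrom b E' μ j p' ∧
      ∀ p'', IsAugPathFrom b E' μ j p'' → cost p' ≤ cost p'' := by
    refine ⟨p, hp, fun p' hp' => ?_⟩
    rcases eq_or_ne p' p with rfl | hne
    exacts [le_rfl, (hmin p' hp' hne).le]
  rw [selectPath, dif_pos hex, Option.some_inj]
  by_contra hne
  exact absurd (hex.choose_spec.2 p hp) (not_le.2 (hmin _ hex.choose_spec.1 hne))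

noncomputable def augStep (cost : List (Edge n m) → ℕ) (b : Fin n → ℕ)
    (E' μ : Finset (Edge n m)) (j : Fin m) : Finset (Edge n m) :=
  match selectPath cost b E' μ j with
  | some p => applyPath μ p
  | none => μ

lemma runAug_eq_foldl (cost : List (Edge n m) → ℕ) (b : Fin n → ℕ) (q : Fin m → ℝ)
    (E' : Finset (Edge n m)) :
    runAug cost b q E' = (sortedTasks m q).foldl (augStep cost b E') ∅ := rfl

lemma augStep_of_selectPath_eq_some {p : List (Edge n m)}
    (h : selectPath cost b E' μ j = some p) : augStep cost b E' μ j = applyPath μ p := by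
  rw [augStep, h]

lemma augStep_of_not_exists (h : ¬∃ p, IsAugPathFrom b E' μ j p) :
    augStep cost b E' μ j = μ := by
  rw [augStep, selectPath_eq_none_iff.2 h]

theorem isCoverable_insert_iff (hμ : IsBMatching b E' μ) (hj : j ∉ matchedTasks μ) :
    IsCoverable b E' (insert j (matchedTasks μ)) ↔ ∃ p, IsAugPathFrom b E' μ j p := by
  constructor
  · rintro ⟨ν, hν, hνμ⟩
    obtain ⟨u, hu, hpath⟩ := exists_isAugPathFrom_of_card_lt hμ hν
      (by rw [hνμ, card_insert_of_notMem hj]; exact Nat.lt_succ_self _)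
    rw [hνμ, insert_sdiff_of_notMem _ hj, sdiff_self, bot_eq_empty, insert_empty,
      mem_singleton] at hu
    exact hu ▸ hpath
  · rintro ⟨p, hp⟩
    exact hp.isCoverable_insert hμ hj

theorem augStep_spec (hμ : IsBMatching b E' μ) (hj : j ∉ matchedTasks μ) :
    IsBMatching b E' (augStep cost b E' μ j) ∧ matchedTasks (augStep cost b E' μ j) =
      (transversalMatroid b E').greedyStep (matchedTasks μ) j := by
  rw [Matroid.greedyStep, transversalMatroid_indep_iff, isCoverable_insert_iff hμ hj]
  rcases hsel : selectPath cost b E' μ j with _ | p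
  · have hno := selectPath_eq_none_iff.1 hsel
    rw [if_neg hno, augStep_of_not_exists hno]
    exact ⟨hμ, rfl⟩
  · have hp := isAugPathFrom_of_selectPath_eq_some hsel
    rw [if_pos ⟨p, hp⟩, augStep_of_selectPath_eq_some hsel]
    exact ⟨hp.isBMatching_applyPath hμ hj, hp.matchedTasks_applyPath hμ hj⟩

lemma foldl_augStep_spec (hμ : IsBMatching b E' μ) {L : List (Fin m)} (hL : L.Nodup)
    (hdisj : ∀ j ∈ L, j ∉ matchedTasks μ) :
    IsBMatching b E' (L.foldl (augStep cost b E') μ) ∧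
      matchedTasks (L.foldl (augStep cost b E') μ) =
        L.foldl (transversalMatroid b E').greedyStep (matchedTasks μ) := by
  induction L generalizing μ with
  | nil => exact ⟨hμ, rfl⟩
  | cons j L ih =>
    obtain ⟨hstep, hmt⟩ := augStep_spec (cost := cost) hμ (hdisj j List.mem_cons_self)
    rw [List.foldl_cons, List.foldl_cons, ← hmt]
    refine ih hstep (List.nodup_cons.1 hL).2 fun k hk hkμ => ?_
    rw [hmt] at hkμ
    rcases mem_insert.1 (Matroid.greedyStep_subset_insert _ _ hkμ) with rfl | hkμ
    · exact (List.nodup_cons.1 hL).1 hk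
    · exact hdisj k (List.mem_cons_of_mem j hk) hkμ

theorem isBMatching_runAug : IsBMatching b E' (runAug cost b q E') :=
  (foldl_augStep_spec isBMatching_empty (nodup_sortedTasks q) (by simp [matchedTasks])).1

theorem matchedTasks_runAug :
    matchedTasks (runAug cost b q E') = (transversalMatroid b E').greedy (sortedTasks m q) :=
  (foldl_augStep_spec isBMatching_empty (nodup_sortedTasks q) (by simp [matchedTasks])).2

lemma IsBMatching.weight_le_sum (hμ : IsBMatching b E' μ) (hq : ∀ t, 0 ≤ q t)
    {T : Finset (Fin m)} (hT : matchedTasks μ ⊆ T) : weight q μ ≤ ∑ t ∈ T, q t := by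
  rw [hμ.weight_eq]
  exact sum_le_sum_of_subset_of_nonneg hT fun t _ _ => hq t

theorem isMaxMatching_runAug (hq : ∀ t, 0 ≤ q t) : IsMaxMatching b q E' (runAug cost b q E') := by
  refine ⟨isBMatching_runAug, fun ν hν => ?_⟩
  rw [hν.weight_eq, isBMatching_runAug.weight_eq, matchedTasks_runAug]
  exact Matroid.sum_le_sum_greedy (pairwise_sortedTasks q) (fun _ _ => Set.mem_univ _)
    (fun t _ => hq t) (transversalMatroid_indep_iff.2 ⟨ν, hν, rfl⟩)
    (fun t _ => mem_sortedTasks q t)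

end Algorithm

section Game

variable {cost : List (Edge n m) → ℕ} {b : Fin n → ℕ} {q : Fin m → ℝ} {μ : Finset (Edge n m)}

lemma IsBMatching.filter_of_forall_not {F G : Finset (Edge n m)} (hμ : IsBMatching b (F ∪ G) μ)
    {P : Edge n m → Prop} [DecidablePred P] (hG : ∀ e ∈ G, ¬P e) :
    IsBMatching b F (μ.filter P) := by
  refine ⟨fun e he => ?_, (hμ.mono (filter_subset _ _)).2⟩
  obtain ⟨heμ, hPe⟩ := mem_filter.1 he
  exact (mem_union.1 (hμ.1 heμ)).resolve_right fun heG => hG e heG hPe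

lemma matchedTasks_eq_union_filter (μ : Finset (Edge n m)) (i : Fin n) :
    matchedTasks μ = matchedTasks (μ.filter (·.1 ≠ i)) ∪ matchedTasks (μ.filter (·.1 = i)) := by
  rw [matchedTasks, matchedTasks, matchedTasks, ← image_union]
  congr 1
  ext e
  simp only [mem_union, mem_filter]
  tauto

lemma isCoverable_insert_of_filter_ne {F G : Finset (Edge n m)} {i : Fin n}
    (hF : ∀ e ∈ F, e.1 ≠ i) (hμ : IsBMatching b (F ∪ G) μ) {x : Fin m}
    (hx : x ∉ matchedTasks μ)
    (hxF : IsCoverable b F (insert x (matchedTasks (μ.filter (·.1 ≠ i))))) :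
    IsCoverable b (F ∪ G) (insert x (matchedTasks μ)) := by
  -- add the edges of `i` in `μ` to a matching `ρ` covering the rest
  obtain ⟨ρ, hρ, hρx⟩ := hxF
  have hμi : IsBMatching b G (μ.filter (·.1 = i)) :=
    (union_comm F G ▸ hμ).filter_of_forall_not fun e he hei => hF e he hei
  have hdisj : Disjoint (matchedTasks ρ) (matchedTasks (μ.filter (·.1 = i))) := by
    rw [hρx, disjoint_left]
    intro t ht hti
    rcases mem_insert.1 ht with rfl | ht
    · exact hx (matchedTasks_mono (filter_subset _ _) hti)
    obtain ⟨e, he, rfl⟩ := mem_matchedTasks.1 ht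
    obtain ⟨f, hf, hfe⟩ := mem_matchedTasks.1 hti
    have := hμ.eq_of_snd_eq (mem_filter.1 he).1 (mem_filter.1 hf).1 hfe.symm
    exact (mem_filter.1 he).2 (this ▸ (mem_filter.1 hf).2)
  refine ⟨_, hρ.union hμi (fun e he f hf => (mem_filter.1 hf).2 ▸ hF e (hρ.1 he)) hdisj, ?_⟩
  rw [matchedTasks, image_union, ← matchedTasks, ← matchedTasks, hρx,
    matchedTasks_eq_union_filter μ i, insert_union]

theorem matchedTasks_runAug_subset_union {F G : Finset (Edge n m)} {i : Fin n}
    (hF : ∀ e ∈ F, e.1 ≠ i) (hG : ∀ e ∈ G, e.1 = i) :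
    matchedTasks (runAug cost b q F) ⊆ matchedTasks (runAug cost b q (F ∪ G)) := by
  rw [matchedTasks_runAug, matchedTasks_runAug]
  refine Matroid.greedy_subset_greedy (fun B hB => ?_) fun _ _ => Set.mem_univ _
  obtain ⟨μ, hμ, rfl⟩ := transversalMatroid_indep_iff.1 hB
  have hμF : IsBMatching b F (μ.filter (·.1 ≠ i)) :=
    hμ.filter_of_forall_not fun e he hei => hei (hG e he)
  refine ⟨_, matchedTasks_mono (filter_subset _ _), transversalMatroid_indep_iff.2 ⟨_, hμF, rfl⟩,
    fun x hx hxF => transversalMatroid_indep_iff.2 ?_⟩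
  exact isCoverable_insert_of_filter_ne hF hμ hx (transversalMatroid_indep_iff.1 hxF)

lemma matchedTasks_runAug_filter_ne_subset (E' : Finset (Edge n m)) (i : Fin n) :
    matchedTasks (runAug cost b q (E'.filter (·.1 ≠ i))) ⊆ matchedTasks (runAug cost b q E') := by
  have := matchedTasks_runAug_subset_union (cost := cost) (b := b) (q := q)
    (F := E'.filter (·.1 ≠ i)) (G := E'.filter (·.1 = i)) (fun e he => (mem_filter.1 he).2)
    fun e he => (mem_filter.1 he).2
  rwa [← filter_or, filter_true_of_mem (p := fun e : Edge n m => e.1 ≠ i ∨ e.1 = i)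
    fun e _ => ne_or_eq e.1 i] at this

lemma util_add_weight_filter_ne (q : Fin m → ℝ) (i : Fin n) (μ : Finset (Edge n m)) :
    util q i μ + weight q (μ.filter (·.1 ≠ i)) = weight q μ :=
  sum_filter_add_sum_filter_not μ (·.1 = i) _

theorem weight_le_util_runAug_union (hq : ∀ t, 0 ≤ q t) {F S : Finset (Edge n m)} {i : Fin n}
    (hF : ∀ e ∈ F, e.1 ≠ i) (hS : IsBMatching b S S) (hSi : ∀ e ∈ S, e.1 = i)
    (hdisj : Disjoint (matchedTasks (runAug cost b q F)) (matchedTasks S)) :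
    weight q S ≤ util q i (runAug cost b q (F ∪ S)) := by
  set ρ := runAug cost b q F
  set ν := runAug cost b q (F ∪ S)
  have hρ : IsBMatching b F ρ := isBMatching_runAug
  -- `ρ ∪ S` competes with `ν` on `F ∪ S`, and the edges of `ν` outside `i` compete with `ρ` on `F`
  have hρS : weight q (ρ ∪ S) ≤ weight q ν :=
    (isMaxMatching_runAug hq).2 _ <| hρ.union hS
      (fun e he f hf => (hSi f hf).symm ▸ hF e (hρ.1 he)) hdisj
  have hνF : weight q (ν.filter (·.1 ≠ i)) ≤ weight q ρ :=
    (isMaxMatching_runAug hq).2 _ <|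
      isBMatching_runAug.filter_of_forall_not (P := (·.1 ≠ i)) fun e he hei => hei (hSi e he)
  have hsum : weight q (ρ ∪ S) = weight q ρ + weight q S :=
    sum_union (disjoint_left.2 fun e heρ heS =>
      disjoint_left.1 hdisj (snd_mem_matchedTasks heρ) (snd_mem_matchedTasks heS))
  linarith [util_add_weight_filter_ne q i ν]

lemma profileInput_update {E : Finset (Edge n m)} {D : Fin n → Finset (Edge n m)}
    (hD : ∀ k, D k ⊆ agentEdges E k) (i : Fin n) (S : Finset (Edge n m)) :
    profileInput (Function.update D i S) = (profileInput D).filter (·.1 ≠ i) ∪ S := by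
  ext e
  simp only [profileInput, mem_union, mem_filter, mem_biUnion, mem_univ, true_and]
  constructor
  · rintro ⟨k, hk⟩
    by_cases hki : k = i
    · subst hki
      rw [Function.update_self] at hk
      exact Or.inr hk
    · rw [Function.update_of_ne hki] at hk
      exact Or.inl ⟨⟨k, hk⟩, (mem_filter.1 (hD k hk)).2 ▸ hki⟩
  · rintro (⟨⟨k, hk⟩, hei⟩ | hS)
    · have hki : k ≠ i := fun h => hei ((mem_filter.1 (hD k hk)).2.trans h)
      exact ⟨k, by rwa [Function.update_of_ne hki]⟩
    · exact ⟨i, by rwa [Function.update_self]⟩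

theorem IsNE.weight_filter_le_util (hq : ∀ t, 0 ≤ q t) {E : Finset (Edge n m)}
    {D : Fin n → Finset (Edge n m)} (hNE : IsNE (runAug cost b q) q E D)
    (hμ : IsBMatching b E μ) (i : Fin n) :
    weight q (μ.filter fun e => e.2 ∉ matchedTasks (runAug cost b q (profileInput D)) ∧ e.1 = i)
      ≤ util q i (runAug cost b q (profileInput D)) := by
  set S := μ.filter fun e => e.2 ∉ matchedTasks (runAug cost b q (profileInput D)) ∧ e.1 = i
  rcases S.eq_empty_or_nonempty with hS | hS
  · rw [hS, weight, sum_empty]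
    exact sum_nonneg fun e _ => hq e.2
  have hSi : ∀ e ∈ S, e.1 = i := fun e he => (mem_filter.1 he).2.2
  -- agent `i` may deviate to reporting exactly the edges of `S`
  have hdev := hNE.2 i S (fun e he => mem_filter.2 ⟨hμ.1 (mem_filter.1 he).1, hSi e he⟩) hS
  rw [profileInput_update fun k => (hNE.1 k).1] at hdev
  refine le_trans (weight_le_util_runAug_union hq (fun e he => (mem_filter.1 he).2)
    ⟨subset_rfl, (hμ.mono (filter_subset _ _)).2⟩ hSi (disjoint_left.2 fun t ht htS => ?_)) hdev
  obtain ⟨e, he, rfl⟩ := mem_matchedTasks.1 htS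
  exact (mem_filter.1 he).2.1 (matchedTasks_runAug_filter_ne_subset _ i ht)

theorem IsNE.weight_le_two_mul (hq : ∀ t, 0 ≤ q t) {E : Finset (Edge n m)}
    {D : Fin n → Finset (Edge n m)} (hNE : IsNE (runAug cost b q) q E D)
    (hμ : IsMaxMatching b q E μ) :
    weight q μ ≤ 2 * weight q (runAug cost b q (profileInput D)) := by
  set μ' := runAug cost b q (profileInput D)
  have hmatched : weight q (μ.filter (·.2 ∈ matchedTasks μ')) ≤ weight q μ' := by
    rw [isBMatching_runAug.weight_eq]
    refine (hμ.1.mono (filter_subset _ _)).weight_le_sum hq fun t ht => ?_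
    obtain ⟨e, he, rfl⟩ := mem_matchedTasks.1 ht
    exact (mem_filter.1 he).2
  have hunmatched : weight q (μ.filter (·.2 ∉ matchedTasks μ')) ≤ weight q μ' := by
    rw [weight_eq_sum_util, weight_eq_sum_util q μ']
    refine sum_le_sum fun i _ => ?_
    rw [util, filter_filter]
    exact hNE.weight_filter_le_util hq hμ.1 i
  have hsplit : weight q (μ.filter (·.2 ∈ matchedTasks μ')) +
      weight q (μ.filter (·.2 ∉ matchedTasks μ')) = weight q μ :=
    sum_filter_add_sum_filter_not _ _ _
  linarith

end Game

section Example

variable {ε : ℝ}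

lemma sortedTasks_example (hε : 0 < ε) : sortedTasks 2 ![1 + ε, 1] = [0, 1] := by
  simp [sortedTasks, List.finRange, List.insertionSort, hε.le]

lemma runAug_example (cost : List (Edge 2 2) → ℕ) (hcost : cost [(0, 0)] < cost [(1, 0)])
    (hε : 0 < ε) :
    runAug cost (fun _ => 1) ![1 + ε, 1] {(0, 0), (1, 0)} = {(0, 0)} := by
  have hsel : selectPath cost (fun _ => 1) {(0, 0), (1, 0)} ∅ 0 = some [((0, 0) : Edge 2 2)] := by
    refine selectPath_eq_some (isAugPathFrom_iff.2 ⟨⟨by simp, by simp, by simp,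
      List.isChain_singleton _, by simp, by simp⟩, by simp, by simp [deg]⟩) fun p hp hne => ?_
    obtain ⟨e, he, -, rfl⟩ := hp.exists_eq_singleton_of_empty
    rcases mem_insert.1 he with rfl | he
    · exact absurd rfl hne
    · rwa [mem_singleton.1 he]
  have hnone : ¬∃ p, IsAugPathFrom (fun _ => 1) {(0, 0), (1, 0)} {((0, 0) : Edge 2 2)} 1 p := by
    rintro ⟨p, hp⟩
    obtain ⟨e, p, rfl⟩ := List.exists_cons_of_ne_nil hp.ne
    have hej : e.2 = 1 := hp.starts e rfl
    rcases mem_insert.1 (hp.mem e List.mem_cons_self).1 with rfl | he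
    · exact absurd hej (by decide)
    · rw [mem_singleton.1 he] at hej
      exact absurd hej (by decide)
  rw [runAug_eq_foldl, sortedTasks_example hε, List.foldl_cons, List.foldl_cons, List.foldl_nil,
    augStep_of_selectPath_eq_some hsel, applyPath_singleton, insert_empty,
    augStep_of_not_exists hnone]

lemma isNE_example (cost : List (Edge 2 2) → ℕ) (hcost : cost [(0, 0)] < cost [(1, 0)])
    (hε : 0 < ε) :
    IsNE (runAug cost (fun _ => 1) ![1 + ε, 1]) ![1 + ε, 1]
      ({(0, 0), (0, 1), (1, 0)} : Finset (Edge 2 2)) ![{(0, 0)}, {(1, 0)}] := by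
  have hD : profileInput ![({(0, 0)} : Finset (Edge 2 2)), {(1, 0)}] = {(0, 0), (1, 0)} := by
    decide
  refine ⟨fun i => ?_, fun i S hS hSne => ?_⟩
  · fin_cases i <;> exact ⟨by decide, by simp⟩
  rw [hD, runAug_example cost hcost hε]
  fin_cases i
  · -- `a₁` already holds the most valuable task
    have hq : ∀ t, (![1 + ε, 1] : Fin 2 → ℝ) t ≤ 1 + ε := fun t => by
      fin_cases t <;> simp; linarith
    calc _ ≤ ((fun _ => 1 : Fin 2 → ℕ) 0 : ℝ) * (1 + ε) :=
          isBMatching_runAug.util_le _ (by linarith) hq 0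
      _ = util ![1 + ε, 1] 0 {(0, 0)} := by simp [util, filter_singleton]
  · -- `a₂` has a single edge
    have hS' : S = {(1, 0)} :=
      (subset_singleton_iff.1 (hS.trans (by decide))).resolve_left hSne.ne_empty
    have hupd : Function.update ![({(0, 0)} : Finset (Edge 2 2)), {(1, 0)}] 1 S =
        ![{(0, 0)}, {(1, 0)}] := by
      rw [hS']
      funext k
      fin_cases k <;> simp [Function.update]
    simp only [Fin.mk_one, Fin.isValue, hupd, hD, runAug_example cost hcost hε, le_refl]

lemma isMaxMatching_example (hε : 0 < ε) :
    IsMaxMatching (fun _ => 1) ![1 + ε, 1] ({(0, 0), (0, 1), (1, 0)} : Finset (Edge 2 2))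
      {(0, 1), (1, 0)} ∧ weight ![1 + ε, 1] ({(0, 1), (1, 0)} : Finset (Edge 2 2)) = 2 + ε := by
  have hweight : weight ![1 + ε, 1] ({(0, 1), (1, 0)} : Finset (Edge 2 2)) = 2 + ε := by
    rw [weight, sum_pair (by decide)]
    simp
    ring
  refine ⟨⟨⟨by decide, by decide, by decide⟩, fun ν hν => ?_⟩, hweight⟩
  have hq : ∀ t, 0 ≤ (![1 + ε, 1] : Fin 2 → ℝ) t := fun t => by
    fin_cases t <;> simp; linarith
  calc weight ![1 + ε, 1] ν ≤ ∑ t, (![1 + ε, 1] : Fin 2 → ℝ) t :=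
        hν.weight_le_sum hq (subset_univ _)
    _ = weight ![1 + ε, 1] ({(0, 1), (1, 0)} : Finset (Edge 2 2)) := by
      rw [hweight, Fin.sum_univ_two]
      simp
      ring

theorem exists_isNE_example (cost : List (Edge 2 2) → ℕ) (hcost : cost [(0, 0)] < cost [(1, 0)])
    (hε : 0 < ε) :
    ∃ D : Fin 2 → Finset (Edge 2 2),
      IsNE (runAug cost (fun _ => 1) ![1 + ε, 1]) ![1 + ε, 1]
        ({(0, 0), (0, 1), (1, 0)} : Finset (Edge 2 2)) D ∧
      weight ![1 + ε, 1] (runAug cost (fun _ => 1) ![1 + ε, 1] (profileInput D)) = 1 + ε ∧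
      ∃ μ, IsMaxMatching (fun _ => 1) ![1 + ε, 1]
          ({(0, 0), (0, 1), (1, 0)} : Finset (Edge 2 2)) μ ∧
        weight ![1 + ε, 1] μ = 2 + ε := by
  refine ⟨_, isNE_example cost hcost hε, ?_, _, isMaxMatching_example hε⟩
  rw [show profileInput ![({(0, 0)} : Finset (Edge 2 2)), {(1, 0)}] = {(0, 0), (1, 0)} by decide,
    runAug_example cost hcost hε]
  simp [weight]

end Example

/-- Both `M_BFS` and `M_DFS` have Price of Anarchy exactly 2 in the
edge-reporting game: every pure Nash equilibrium yields at least half of the optimal social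
welfare; and for every `ε > 0`, on the instance with two agents of capacity 1, tasks of
values `1+ε` and `1`, and true edges `{(a₁,t₁),(a₁,t₂),(a₂,t₁)}`, there is a pure Nash
equilibrium of welfare `1+ε` while the optimum is `2+ε`. -/
theorem PoA_of_MBFS_MDFS_is_two :
    (∀ (n m : ℕ) (b : Fin n → ℕ) (q : Fin m → ℝ), (∀ j, 0 < q j) →
      ∀ (E : Finset (Edge n m)) (D : Fin n → Finset (Edge n m)),
        IsNE (MBFS b q) q E D → ∀ μ, IsMaxMatching b q E μ →
          weight q μ ≤ 2 * weight q (MBFS b q (profileInput D))) ∧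
    (∀ (n m : ℕ) (b : Fin n → ℕ) (q : Fin m → ℝ), (∀ j, 0 < q j) →
      ∀ (E : Finset (Edge n m)) (D : Fin n → Finset (Edge n m)),
        IsNE (MDFS b q) q E D → ∀ μ, IsMaxMatching b q E μ →
          weight q μ ≤ 2 * weight q (MDFS b q (profileInput D))) ∧
    (∀ ε : ℝ, 0 < ε →
      ∃ D : Fin 2 → Finset (Edge 2 2),
        IsNE (MBFS (fun _ => 1) ![1 + ε, 1]) ![1 + ε, 1]
          ({(0,0),(0,1),(1,0)} : Finset (Edge 2 2)) D ∧
        weight ![1 + ε, 1] (MBFS (fun _ => 1) ![1 + ε, 1] (profileInput D)) = 1 + ε ∧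
        ∃ μ, IsMaxMatching (fun _ => 1) ![1 + ε, 1]
            ({(0,0),(0,1),(1,0)} : Finset (Edge 2 2)) μ ∧
          weight ![1 + ε, 1] μ = 2 + ε) ∧
    (∀ ε : ℝ, 0 < ε →
      ∃ D : Fin 2 → Finset (Edge 2 2),
        IsNE (MDFS (fun _ => 1) ![1 + ε, 1]) ![1 + ε, 1]
          ({(0,0),(0,1),(1,0)} : Finset (Edge 2 2)) D ∧
        weight ![1 + ε, 1] (MDFS (fun _ => 1) ![1 + ε, 1] (profileInput D)) = 1 + ε ∧
        ∃ μ, IsMaxMatching (fun _ => 1) ![1 + ε, 1]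
            ({(0,0),(0,1),(1,0)} : Finset (Edge 2 2)) μ ∧
          weight ![1 + ε, 1] μ = 2 + ε) :=
  ⟨fun _ _ _ _ hq _ _ hNE _ hμ => hNE.weight_le_two_mul (fun t => (hq t).le) hμ,
    fun _ _ _ _ hq _ _ hNE _ hμ => hNE.weight_le_two_mul (fun t => (hq t).le) hμ,
    fun _ hε => exists_isNE_example (bfsCost 2 2) (by decide) hε,
    fun _ hε => exists_isNE_example (dfsCost 2 2) (by decide) hε⟩
end

section
/- No randomized agent-ordering makes the optimal matching mechanism truthful in expectation: for any probability distribution over agent orderings used before running the maximum-weight b-matching algorithm, there exists an instance (two agents of capacity 1, tasks of values 2 and 1, complete bipartite true edge set) and an agent whose expected utility from truthful reporting is strictly less than 2, while hiding its edge to the value-1 task forces every optimal matching to assign it the value-2 task, giving expected utility exactly 2. -/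
open Classical

variable {n m : ℕ}

-- util split
lemma util01 (q : Fin 2 → ℝ) (μ : Finset (Edge 2 2)) :
    util q 0 μ + util q 1 μ = weight q μ := by
  unfold util weight
  have hpt : ∀ e : Edge 2 2, (e.1 = (1:Fin 2)) ↔ ¬ e.1 = (0:Fin 2) := by decide
  have h1 : μ.filter (fun e => e.1 = (1:Fin 2)) = μ.filter (fun e => ¬ e.1 = (0:Fin 2)) :=
    Finset.filter_congr (fun e _ => hpt e)
  rw [h1]
  exact Finset.sum_filter_add_sum_filter_not μ _ _

lemma sum_filter_task (μ : Finset (Edge 2 2)) (j : Fin 2) (q : Fin 2 → ℝ) :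
    ∑ e ∈ μ.filter (fun e => e.2 = j), q e.2 = (μ.filter (fun e => e.2 = j)).card * q j := by
  rw [Finset.sum_congr rfl (fun e he => by rw [(Finset.mem_filter.1 he).2]),
    Finset.sum_const, nsmul_eq_mul]

lemma weight_le_three {E' μ : Finset (Edge 2 2)} (h : IsBMatching (fun _ => 1) E' μ) :
    weight ![2,1] μ ≤ 3 := by
  have hpt : ∀ e : Edge 2 2, (e.2 = (1:Fin 2)) ↔ ¬ e.2 = (0:Fin 2) := by decide
  have h1 : μ.filter (fun e => e.2 = (1:Fin 2)) = μ.filter (fun e => ¬ e.2 = (0:Fin 2)) :=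
    Finset.filter_congr (fun e _ => hpt e)
  have key := Finset.sum_filter_add_sum_filter_not μ (fun e => e.2 = (0:Fin 2)) (fun e => (![2,1] : Fin 2 → ℝ) e.2)
  unfold weight
  rw [← key, ← h1, sum_filter_task, sum_filter_task]
  have c0 := h.2.2 0
  have c1 := h.2.2 1
  have : (![2,1] : Fin 2 → ℝ) 0 = 2 := by norm_num
  rw [this]
  have : (![2,1] : Fin 2 → ℝ) 1 = 1 := by norm_num
  rw [this]
  have e0 : ((μ.filter (fun e => e.2 = (0:Fin 2))).card : ℝ) ≤ 1 := by exact_mod_cast c0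
  have e1 : ((μ.filter (fun e => e.2 = (1:Fin 2))).card : ℝ) ≤ 1 := by exact_mod_cast c1
  nlinarith

lemma util_le_two {E' μ : Finset (Edge 2 2)} (h : IsBMatching (fun _ => 1) E' μ) (i : Fin 2) :
    util ![2,1] i μ ≤ 2 := by
  have hq : ∀ e : Edge 2 2, (![2,1] : Fin 2 → ℝ) e.2 ≤ 2 := by
    intro e; fin_cases e <;> norm_num
  have hcard : (μ.filter (fun e => e.1 = i)).card ≤ 1 := h.2.1 i
  calc util ![2,1] i μ ≤ (μ.filter (fun e => e.1 = i)).card • (2:ℝ) :=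
        Finset.sum_le_card_nsmul _ _ 2 (fun e _ => hq e)
    _ ≤ 1 • (2:ℝ) := by
        rw [nsmul_eq_mul, nsmul_eq_mul]
        have : ((μ.filter (fun e => e.1 = i)).card : ℝ) ≤ 1 := by exact_mod_cast hcard
        push_cast
        nlinarith
    _ = 2 := by norm_num

lemma weight_pair (a b : Edge 2 2) (hab : a ≠ b) (q : Fin 2 → ℝ) :
    weight q {a, b} = q a.2 + q b.2 := by
  unfold weight
  rw [Finset.sum_insert (by simp [hab]), Finset.sum_singleton]

-- truthful instance: weight of any max matching over univ is 3
lemma max_univ_weight {μ : Finset (Edge 2 2)}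
    (h : IsMaxMatching (fun _ => 1) ![2,1] Finset.univ μ) : weight ![2,1] μ = 3 := by
  have hb : IsBMatching (fun _ => 1) (Finset.univ : Finset (Edge 2 2)) {((0:Fin 2),(0:Fin 2)), (1,1)} :=
    ⟨by decide, by decide, by decide⟩
  have h3 := h.2 _ hb
  rw [weight_pair _ _ (by decide)] at h3
  norm_num at h3
  have := weight_le_three h.1
  linarith

lemma fin2cases (i : Fin 2) : i = 0 ∨ i = 1 := by revert i; decide

lemma dev_key (i : Fin 2) (μ : Finset (Edge 2 2))
    (h : IsMaxMatching (fun _ => 1) ![2,1] (deviate Finset.univ i {(i,0)}) μ) :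
    (i,0) ∈ μ ∧ μ.filter (fun e => e.1 = i) = {(i,0)} := by
  have hsub : ∀ e ∈ μ, e.1 = i → e = (i, 0) := by
    intro e he hei
    have hE : e ∈ deviate Finset.univ i {(i,0)} := h.1.1 he
    simp only [deviate, Finset.mem_union, Finset.mem_filter, Finset.mem_singleton] at hE
    rcases hE with ⟨_, hne⟩ | rfl
    · exact absurd hei hne
    · rfl
  have hmem : (i, 0) ∈ μ := by
    by_contra hnot
    have hu0 : util ![2,1] i μ = 0 := by
      unfold util
      rw [Finset.filter_eq_empty_iff.2 (fun e he hei => hnot (hsub e he hei ▸ he))]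
      simp
    have huw := util01 ![2,1] μ
    have hle0 := util_le_two h.1 0
    have hle1 := util_le_two h.1 1
    rcases fin2cases i with rfl | rfl
    · have hb : IsBMatching (fun _ => 1) (deviate Finset.univ (0:Fin 2) {((0:Fin 2),(0:Fin 2))})
          {((0:Fin 2),(0:Fin 2)), (1, 1)} := ⟨by decide, by decide, by decide⟩
      have h3 := h.2 _ hb
      rw [weight_pair _ _ (by decide)] at h3
      norm_num at h3
      linarith [huw, hu0, hle1]
    · have hb : IsBMatching (fun _ => 1) (deviate Finset.univ (1:Fin 2) {((1:Fin 2),(0:Fin 2))})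
          {((1:Fin 2),(0:Fin 2)), (0, 1)} := ⟨by decide, by decide, by decide⟩
      have h3 := h.2 _ hb
      rw [weight_pair _ _ (by decide)] at h3
      norm_num at h3
      linarith [huw, hu0, hle0]
  refine ⟨hmem, ?_⟩
  apply Finset.Subset.antisymm
  · intro e he
    have := Finset.mem_filter.1 he
    simp [hsub e this.1 this.2]
  · intro e he
    simp only [Finset.mem_singleton] at he
    subst he
    exact Finset.mem_filter.2 ⟨hmem, rfl⟩

lemma dev_util (i : Fin 2) (μ : Finset (Edge 2 2))
    (h : IsMaxMatching (fun _ => 1) ![2,1] (deviate Finset.univ i {(i,0)}) μ) :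
    util ![2,1] i μ = 2 := by
  unfold util
  rw [(dev_key i μ h).2, Finset.sum_singleton]
  norm_num

lemma valid0 : ValidReport (Finset.univ : Finset (Edge 2 2)) 0 {((0:Fin 2),(0:Fin 2))} :=
  ⟨by decide, Finset.singleton_nonempty _⟩
lemma valid1 : ValidReport (Finset.univ : Finset (Edge 2 2)) 1 {((1:Fin 2),(0:Fin 2))} :=
  ⟨by decide, Finset.singleton_nonempty _⟩


/-- No randomized agent-ordering makes the optimal matching mechanism
truthful in expectation: on the witness instance with two agents of capacity 1, tasks of
values `2` and `1`, and the complete bipartite true edge set, for any family of mechanisms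
indexed by agent orderings that always output a maximum-weight b-matching over the reported
edges, and any probability distribution `w` over orderings, there is an agent whose expected
utility from truthful reporting is strictly less than `2`, while hiding its edge to the
value-1 task yields expected utility exactly `2` (every optimal matching then assigns it the
value-2 task). -/
theorem randomized_ordering_not_truthful_in_expectation
    (Mo : Equiv.Perm (Fin 2) → Finset (Edge 2 2) → Finset (Edge 2 2))
    (hOpt : ∀ (σ : Equiv.Perm (Fin 2)) (E' : Finset (Edge 2 2)),
      IsMaxMatching (fun _ => 1) ![2, 1] E' (Mo σ E'))
    (w : Equiv.Perm (Fin 2) → ℝ) (hw : ∀ σ, 0 ≤ w σ) (hw1 : ∑ σ, w σ = 1) :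
    ∃ i : Fin 2,
      (∑ σ, w σ * util ![2, 1] i (Mo σ (Finset.univ : Finset (Edge 2 2))) < 2) ∧
      ValidReport (Finset.univ : Finset (Edge 2 2)) i {(i, 0)} ∧
      (∀ μ : Finset (Edge 2 2), IsMaxMatching (fun _ => 1) ![2, 1]
          (deviate (Finset.univ : Finset (Edge 2 2)) i {(i, 0)}) μ → (i, 0) ∈ μ) ∧
      ∑ σ, w σ * util ![2, 1] i
          (Mo σ (deviate (Finset.univ : Finset (Edge 2 2)) i {(i, 0)})) = 2 := by
  
  set A := ∑ σ, w σ * util ![2, 1] 0 (Mo σ (Finset.univ : Finset (Edge 2 2))) with hAdef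
  set B := ∑ σ, w σ * util ![2, 1] 1 (Mo σ (Finset.univ : Finset (Edge 2 2))) with hBdef
  have h3 : ∀ σ, util ![2,1] 0 (Mo σ Finset.univ) + util ![2,1] 1 (Mo σ Finset.univ) = 3 :=
    fun σ => by rw [util01]; exact max_univ_weight (hOpt σ _)
  have hAB : A + B = 3 := by
    rw [hAdef, hBdef, ← Finset.sum_add_distrib]
    calc ∑ σ, (w σ * util ![2,1] 0 (Mo σ Finset.univ) + w σ * util ![2,1] 1 (Mo σ Finset.univ))
        = ∑ σ, w σ * 3 := Finset.sum_congr rfl (fun σ _ => by rw [← mul_add, h3 σ])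
      _ = 3 := by rw [← Finset.sum_mul, hw1]; norm_num
  have hexp2 : ∀ i : Fin 2,
      ∑ σ, w σ * util ![2,1] i (Mo σ (deviate (Finset.univ : Finset (Edge 2 2)) i {(i,0)})) = 2 := by
    intro i
    calc ∑ σ, w σ * util ![2,1] i (Mo σ (deviate (Finset.univ : Finset (Edge 2 2)) i {(i,0)}))
        = ∑ σ, w σ * 2 := Finset.sum_congr rfl (fun σ _ => by rw [dev_util i _ (hOpt σ _)])
      _ = 2 := by rw [← Finset.sum_mul, hw1]; norm_num
  have hkey : ∀ i : Fin 2, ∀ μ : Finset (Edge 2 2), IsMaxMatching (fun _ => 1) ![2, 1]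
      (deviate (Finset.univ : Finset (Edge 2 2)) i {(i, 0)}) μ → (i, 0) ∈ μ :=
    fun i μ h => (dev_key i μ h).1
  by_cases hA : A < 2
  · exact ⟨0, hA, valid0, hkey 0, hexp2 0⟩
  · refine ⟨1, ?_, valid1, hkey 1, hexp2 1⟩
    push_neg at hA
    linarith
end
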